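/- arXiv:2208.14012 — 2 statements merged into one kernel-verified Lean document; each statement's English description precedes it below -/
import Mathlib

section
/- Let F : Ω → U be a continuous frame for a Hilbert C*-module U with frame operator S. Then the mapping ω ↦ S^{-1}F(ω) is a dual for F; i.e., f = ∫_Ω ⟨f, S^{-1}F(ω)⟩ F(ω) dμ(ω) for all f ∈ U. -/
open MeasureTheory

class HCSM (A : outParam Type*) (U : Type*) [CStarAlgebra A] [PartialOrder A] [StarOrderedRing A]
    [NormedAddCommGroup U] [NormedSpace ℂ U] extends SMul A U where
  inner : U → U → A
  add_left : ∀ f g h : U, inner (f + g) h = inner f h + inner g h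
  smul_left : ∀ (a : A) (f g : U), inner (a • f) g = a * inner f g
  smulC_left : ∀ (c : ℂ) (f g : U), inner (c • f) g = c • inner f g
  star_inner : ∀ f g : U, star (inner f g) = inner g f
  inner_nonneg : ∀ f : U, 0 ≤ inner f f
  inner_definite : ∀ f : U, inner f f = 0 → f = 0
  norm_inner : ∀ f : U, ‖f‖ = Real.sqrt ‖inner f f‖

notation "⟪" f ", " g "⟫" => HCSM.inner f g

variable {A : Type*} [CStarAlgebra A] [PartialOrder A] [StarOrderedRing A]
variable {U : Type*} [NormedAddCommGroup U] [NormedSpace ℂ U] [CompleteSpace U] [HCSM A U]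
variable {Ω : Type*} [MeasurableSpace Ω]

def MemL2 (μ : Measure Ω) (φ : Ω → A) : Prop :=
  AEStronglyMeasurable φ μ ∧ Integrable (fun ω => φ ω * star (φ ω)) μ

def WeaklyMeasurable (μ : Measure Ω) (F : Ω → U) : Prop :=
  ∀ f : U, AEStronglyMeasurable (fun ω => (⟪f, F ω⟫ : A)) μ

def IsBessel (μ : Measure Ω) (F : Ω → U) (b : ℝ) : Prop :=
  WeaklyMeasurable μ F ∧ 0 < b ∧ ∀ f : U,
    Integrable (fun ω => (⟪f, F ω⟫ : A) * ⟪F ω, f⟫) μ ∧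
    (∫ ω, (⟪f, F ω⟫ : A) * ⟪F ω, f⟫ ∂μ) ≤ b • (⟪f, f⟫ : A)

def IsContFrame (μ : Measure Ω) (F : Ω → U) (a b : ℝ) : Prop :=
  WeaklyMeasurable μ F ∧ 0 < a ∧ 0 < b ∧ ∀ f : U,
    Integrable (fun ω => (⟪f, F ω⟫ : A) * ⟪F ω, f⟫) μ ∧
    a • (⟪f, f⟫ : A) ≤ (∫ ω, (⟪f, F ω⟫ : A) * ⟪F ω, f⟫ ∂μ) ∧
    (∫ ω, (⟪f, F ω⟫ : A) * ⟪F ω, f⟫ ∂μ) ≤ b • (⟪f, f⟫ : A)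

def MuComplete (μ : Measure Ω) (F : Ω → U) : Prop :=
  ∀ f : U, (∀ᵐ ω ∂μ, (⟪f, F ω⟫ : A) = 0) → f = 0

def IsRieszBasis (μ : Measure Ω) (F : Ω → U) (a b : ℝ) : Prop :=
  WeaklyMeasurable μ F ∧ MuComplete μ F ∧ 0 < a ∧ 0 < b ∧
  ∀ φ : Ω → A, MemL2 μ φ → ∀ Ω₁ : Set Ω, MeasurableSet Ω₁ → μ Ω₁ < ⊤ →
    a * Real.sqrt ‖∫ ω in Ω₁, φ ω * star (φ ω) ∂μ‖ ≤ ‖∫ ω in Ω₁, φ ω • F ω ∂μ‖ ∧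
    ‖∫ ω in Ω₁, φ ω • F ω ∂μ‖ ≤ b * Real.sqrt ‖∫ ω in Ω₁, φ ω * star (φ ω) ∂μ‖

def L2Independent (μ : Measure Ω) (F : Ω → U) : Prop :=
  ∀ φ : Ω → A, MemL2 μ φ → (∫ ω, φ ω • F ω ∂μ) = 0 → ∀ ω, φ ω = 0

def IsDual (μ : Measure Ω) (F G : Ω → U) : Prop :=
  ∀ f : U, Integrable (fun ω => (⟪f, G ω⟫ : A) • F ω) μ ∧
    (∫ ω, (⟪f, G ω⟫ : A) • F ω ∂μ) = f

def IsRieszType (μ : Measure Ω) (F : Ω → U) : Prop :=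
  (∃ G : Ω → U, (∃ b, IsBessel μ G b) ∧ IsDual μ F G) ∧
  ∀ G₁ G₂ : Ω → U, (∃ b, IsBessel μ G₁ b) → IsDual μ F G₁ →
    (∃ b, IsBessel μ G₂ b) → IsDual μ F G₂ → G₁ =ᵐ[μ] G₂

/-!
`S` is self-adjoint, since the integrand defining `⟪S f, g⟫` is the adjoint of the one defining
`⟪S g, f⟫`; hence so is `S⁻¹`, and `⟪f, S⁻¹ F ω⟫ = ⟪S⁻¹ f, F ω⟫`. By Cauchy–Schwarz the inner
product is continuous, so it commutes with the Bochner integral, and pairing the integral with any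
`g` gives `⟪S S⁻¹ f, g⟫ = ⟪f, g⟫`.
-/

namespace HCSM

variable {A : Type*} [CStarAlgebra A] [PartialOrder A] [StarOrderedRing A]
variable {U : Type*} [NormedAddCommGroup U] [NormedSpace ℂ U] [HCSM A U]

/-- Mathlib's Hilbert C⋆-modules have the inner product linear in the second variable, so
`⟪f, g⟫` is `inner A g f` for this instance. -/
instance toCStarModule : CStarModule A U where
  inner f g := ⟪g, f⟫
  inner_add_right := add_left _ _ _
  inner_self_nonneg := inner_nonneg _
  inner_self := ⟨inner_definite _, by rintro rfl; simpa using smulC_left (0 : ℂ) (0 : U) 0⟩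
  inner_op_smul_right := smul_left _ _ _
  inner_smul_right_complex := smulC_left _ _ _
  star_inner f g := star_inner g f
  norm_eq_sqrt_norm_inner_self := norm_inner

lemma inner_sub_left (f g h : U) : (⟪f - g, h⟫ : A) = ⟪f, h⟫ - ⟪g, h⟫ :=
  CStarModule.inner_sub_right (A := A) (x := h) (y := f) (z := g)

lemma ext_inner_left {f g : U} (h : ∀ k : U, (⟪f, k⟫ : A) = ⟪g, k⟫) : f = g := by
  rw [← sub_eq_zero]
  exact inner_definite _ (by rw [inner_sub_left, h, sub_self])

lemma integral_inner_left [CompleteSpace U] {Ω : Type*} [MeasurableSpace Ω] {μ : Measure Ω}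
    {v : Ω → U} (hv : Integrable v μ) (g : U) :
    ∫ ω, (⟪v ω, g⟫ : A) ∂μ = ⟪∫ ω, v ω ∂μ, g⟫ :=
  (CStarModule.innerSL (A := A) g).integral_comp_comm hv

def IsSymmetric (T : U → U) : Prop :=
  ∀ f g : U, (⟪T f, g⟫ : A) = ⟪f, T g⟫

lemma IsSymmetric.of_rightInverse {S Sinv : U → U} (hS : IsSymmetric S)
    (hSinv : Function.RightInverse Sinv S) : IsSymmetric Sinv := fun f g => by
  rw [← hSinv g, ← hS, hSinv f, hSinv g]

end HCSM

section FrameOperator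

variable {A : Type*} [CStarAlgebra A] [PartialOrder A] [StarOrderedRing A]
variable {U : Type*} [NormedAddCommGroup U] [NormedSpace ℂ U] [HCSM A U]
variable {Ω : Type*} [MeasurableSpace Ω] {μ : Measure Ω} {F : Ω → U} {S : U → U}

def IsFrameOperator (μ : Measure Ω) (F : Ω → U) (S : U → U) : Prop :=
  ∀ f g : U, (⟪S f, g⟫ : A) = ∫ ω, (⟪f, F ω⟫ : A) * ⟪F ω, g⟫ ∂μ

lemma IsFrameOperator.isSymmetric (hS : IsFrameOperator μ F S) : HCSM.IsSymmetric S := by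
  intro f g
  calc (⟪S f, g⟫ : A)
      = ∫ ω, (⟪f, F ω⟫ : A) * ⟪F ω, g⟫ ∂μ := hS f g
    _ = ∫ ω, star ((⟪g, F ω⟫ : A) * ⟪F ω, f⟫) ∂μ := by simp only [star_mul, HCSM.star_inner]
    _ = star ⟪S g, f⟫ := by rw [hS g f]; exact (starL' ℝ).integral_comp_comm _
    _ = ⟪f, S g⟫ := HCSM.star_inner _ _

lemma IsFrameOperator.integral_inner_smul [CompleteSpace U] (hS : IsFrameOperator μ F S) {f : U}
    (hint : Integrable (fun ω => (⟪f, F ω⟫ : A) • F ω) μ) :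
    ∫ ω, (⟪f, F ω⟫ : A) • F ω ∂μ = S f :=
  HCSM.ext_inner_left fun g => by
    simp only [← HCSM.integral_inner_left hint, HCSM.smul_left, hS f g]

end FrameOperator

theorem canonical_dual_is_dual_general
    {A : Type*} [CStarAlgebra A] [PartialOrder A] [StarOrderedRing A]
    {U : Type*} [NormedAddCommGroup U] [NormedSpace ℂ U] [CompleteSpace U] [HCSM A U]
    {Ω : Type*} [MeasurableSpace Ω] (μ : Measure Ω)
    (F : Ω → U)
    (S Sinv : U → U)
    (hS : ∀ f g : U, (⟪S f, g⟫ : A) = ∫ ω, (⟪f, F ω⟫ : A) * ⟪F ω, g⟫ ∂μ)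
    (hSinv : ∀ f : U, Sinv (S f) = f ∧ S (Sinv f) = f)
    (hint : ∀ f : U, Integrable (fun ω => (⟪f, Sinv (F ω)⟫ : A) • F ω) μ) :
    ∀ f : U, (∫ ω, (⟪f, Sinv (F ω)⟫ : A) • F ω ∂μ) = f := by
  have hframe : IsFrameOperator μ F S := hS
  have hSSinv : Function.RightInverse Sinv S := fun f => (hSinv f).2
  have hSinv_symm : HCSM.IsSymmetric Sinv := hframe.isSymmetric.of_rightInverse hSSinv
  intro f
  have hcoeff : (fun ω => (⟪f, Sinv (F ω)⟫ : A) • F ω) = fun ω => (⟪Sinv f, F ω⟫ : A) • F ω :=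
    funext fun ω => by rw [hSinv_symm]
  rw [hcoeff, hframe.integral_inner_smul (hcoeff ▸ hint f), hSSinv f]

theorem canonical_dual_is_dual
    {A : Type*} [CStarAlgebra A] [PartialOrder A] [StarOrderedRing A]
    {U : Type*} [NormedAddCommGroup U] [NormedSpace ℂ U] [CompleteSpace U] [HCSM A U]
    {Ω : Type*} [MeasurableSpace Ω] (μ : Measure Ω)
    (F : Ω → U) (a b : ℝ) (hF : IsContFrame μ F a b)
    (S Sinv : U → U)
    (hS : ∀ f g : U, (⟪S f, g⟫ : A) = ∫ ω, (⟪f, F ω⟫ : A) * ⟪F ω, g⟫ ∂μ)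
    (hSinv : ∀ f : U, Sinv (S f) = f ∧ S (Sinv f) = f)
    (hint : ∀ f : U, Integrable (fun ω => (⟪f, Sinv (F ω)⟫ : A) • F ω) μ) :
    ∀ f : U, (∫ ω, (⟪f, Sinv (F ω)⟫ : A) • F ω ∂μ) = f :=
  canonical_dual_is_dual_general μ F S Sinv hS hSinv hint
end

section
/- Let F : Ω → U be a continuous Riesz basis with bounds A, B and synthesis operator T. Then the operator V = T*T on L²(Ω,A), given by Vφ = ∫_Ω φ(ω)⟨F(ω),F(·)⟩dμ(ω), is adjointable and invertible, and satisfies ‖(T*T)^{-1}‖^{-1} ≤ V ≤ B (as operator inequalities). -/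
open MeasureTheory

variable {A : Type*} [CStarAlgebra A] [PartialOrder A] [StarOrderedRing A]
variable {U : Type*} [NormedAddCommGroup U] [NormedSpace ℂ U] [CompleteSpace U] [HCSM A U]
variable {Ω : Type*} [MeasurableSpace Ω]

structure L2Model (A : Type*) [CStarAlgebra A] [PartialOrder A] [StarOrderedRing A]
    {Ω : Type*} [MeasurableSpace Ω] (μ : Measure Ω)
    (H : Type*) [NormedAddCommGroup H] [NormedSpace ℂ H] [HCSM A H] where
  repr : H → Ω → A
  memL2 : ∀ φ : H, MemL2 μ (repr φ)
  inner_eq : ∀ φ ψ : H, (⟪φ, ψ⟫ : A) = ∫ ω, repr φ ω * star (repr ψ ω) ∂μ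
  surj : ∀ g : Ω → A, MemL2 μ g → ∃ φ : H, repr φ =ᵐ[μ] g


section Helpers
variable {A : Type*} [CStarAlgebra A] [PartialOrder A] [StarOrderedRing A]
variable {E : Type*} [NormedAddCommGroup E] [NormedSpace ℂ E] [HCSM A E]

lemma hcsm_zero_left (g : E) : (⟪(0:E), g⟫ : A) = 0 := by
  have h := HCSM.add_left (0:E) 0 g
  rw [add_zero] at h
  exact (add_eq_left.mp h.symm)

lemma hcsm_zero_smul (f : E) : (0:A) • f = 0 :=
  HCSM.inner_definite _ (by rw [HCSM.smul_left, zero_mul])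

lemma hcsm_zero_right (f : E) : (⟪f, (0:E)⟫ : A) = 0 := by
  rw [← HCSM.star_inner, hcsm_zero_left, star_zero]

lemma hcsm_add_right (f g h : E) : (⟪f, g + h⟫ : A) = ⟪f, g⟫ + ⟪f, h⟫ := by
  rw [← HCSM.star_inner, HCSM.add_left, star_add, HCSM.star_inner, HCSM.star_inner]

lemma hcsm_neg_left (f g : E) : (⟪-f, g⟫ : A) = -⟪f, g⟫ := by
  have h := HCSM.add_left f (-f) g
  rw [add_neg_cancel, hcsm_zero_left] at h
  exact eq_neg_of_add_eq_zero_right h.symm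

lemma hcsm_sub_left (f g h : E) : (⟪f - g, h⟫ : A) = ⟪f, h⟫ - ⟪g, h⟫ := by
  rw [sub_eq_add_neg, HCSM.add_left, hcsm_neg_left, sub_eq_add_neg]

lemma hcsm_sub_right (f g h : E) : (⟪f, g - h⟫ : A) = ⟪f, g⟫ - ⟪f, h⟫ := by
  rw [← HCSM.star_inner, hcsm_sub_left, star_sub, HCSM.star_inner, HCSM.star_inner]

lemma hcsm_self_sa (f : E) : IsSelfAdjoint (⟪f, f⟫ : A) :=
  IsSelfAdjoint.of_nonneg (HCSM.inner_nonneg f)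

lemma hcsm_norm_inner_self (f : E) : ‖(⟪f, f⟫ : A)‖ = ‖f‖ ^ 2 := by
  rw [HCSM.norm_inner f, Real.sq_sqrt (norm_nonneg _)]

lemma hcsm_smul_self (a : A) (f : E) : (⟪a • f, a • f⟫ : A) = a * ⟪f, f⟫ * star a := by
  rw [HCSM.smul_left, ← HCSM.star_inner (a • f) f, HCSM.smul_left, star_mul]
  simp [mul_assoc, HCSM.star_inner]

lemma hcsm_expand_sub (x y : E) :
    (⟪x - y, x - y⟫ : A) = ⟪x, x⟫ - ⟪x, y⟫ - ⟪y, x⟫ + ⟪y, y⟫ := by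
  rw [hcsm_sub_left, hcsm_sub_right, hcsm_sub_right]
  abel

/-- Cauchy–Schwarz norm inequality for Hilbert C*-modules. -/
lemma hcsm_norm_inner_le (f g : E) : ‖(⟪f, g⟫ : A)‖ ≤ ‖f‖ * ‖g‖ := by
  by_cases hf : (⟪f, f⟫ : A) = 0
  · have hf0 : f = 0 := HCSM.inner_definite f hf
    subst hf0
    simp [hcsm_zero_left]
  · set p : A := ⟪f, f⟫ with hp
    set x : A := ⟪f, g⟫ with hx
    have hpnorm : 0 < ‖p‖ := norm_pos_iff.mpr hf
    set c : ℝ := ‖p‖⁻¹ with hc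
    have hcpos : 0 < c := inv_pos.mpr hpnorm
    set X : A := star x * x with hX
    have hXnn : 0 ≤ X := star_mul_self_nonneg x
    set aa : A := c • (star x) with haa
    have hsaa : star aa = c • x := by rw [haa, star_smul, star_star, star_trivial]
    have e1 : (⟪aa • f, aa • f⟫ : A) = (c * c) • (star x * p * x) := by
      rw [hcsm_smul_self, ← hp, hsaa, haa]
      simp only [smul_mul_assoc, mul_smul_comm, smul_smul]
    have e2 : (⟪aa • f, g⟫ : A) = c • X := by
      rw [HCSM.smul_left, haa, smul_mul_assoc, ← hx, ← hX]
    have e3 : (⟪g, aa • f⟫ : A) = c • X := by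
      rw [← HCSM.star_inner (aa • f) g, e2, star_smul, star_trivial, hX, star_mul, star_star]
    have h0 : (0:A) ≤ (c*c) • (star x * p * x) - c • X - c • X + ⟪g, g⟫ := by
      have := HCSM.inner_nonneg (aa • f - g)
      rwa [hcsm_expand_sub, e1, e2, e3] at this
    have hconj : (c*c) • (star x * p * x) ≤ c • X := by
      have h1 : star x * p * x ≤ ‖p‖ • (star x * x) :=
        CStarAlgebra.star_left_conjugate_le_norm_smul (hcsm_self_sa f)
      have h2 := smul_le_smul_of_nonneg_left h1 (le_of_lt (mul_pos hcpos hcpos))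
      rwa [smul_smul, show c * c * ‖p‖ = c by
        rw [hc, mul_assoc, inv_mul_cancel₀ (ne_of_gt hpnorm), mul_one], ← hX] at h2
    have h3 : c • X ≤ ⟪g, g⟫ := by
      have h4 : (c*c) • (star x * p * x) - c • X - c • X + ⟪g, g⟫
          ≤ c • X - c • X - c • X + ⟪g, g⟫ :=
        add_le_add_left (sub_le_sub_right (sub_le_sub_right hconj _) _) _
      have h5 := h0.trans h4
      have h6 : c • X - c • X - c • X + (⟪g, g⟫:A) = ⟪g, g⟫ - c • X := by abel
      rw [h6] at h5
      exact sub_nonneg.mp h5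
    have hfin : X ≤ ‖p‖ • (⟪g, g⟫:A) := by
      have := smul_le_smul_of_nonneg_left h3 (norm_nonneg p)
      rwa [smul_smul, mul_inv_cancel₀ (ne_of_gt hpnorm), one_smul] at this
    have hnx : ‖X‖ ≤ ‖p‖ * ‖(⟪g, g⟫:A)‖ := by
      refine (CStarAlgebra.norm_le_norm_of_nonneg_of_le hXnn hfin).trans ?_
      rw [norm_smul, Real.norm_eq_abs, abs_of_nonneg (norm_nonneg p)]
    have hXn : ‖X‖ = ‖x‖ * ‖x‖ := CStarRing.norm_star_mul_self
    have hfn : ‖p‖ = ‖f‖ ^ 2 := hcsm_norm_inner_self f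
    have hgn : ‖(⟪g, g⟫:A)‖ = ‖g‖ ^ 2 := hcsm_norm_inner_self g
    have hsq : ‖x‖ ^ 2 ≤ (‖f‖ * ‖g‖) ^ 2 := by nlinarith [hnx, hXn, hfn, hgn]
    have := Real.sqrt_le_sqrt hsq
    rwa [Real.sqrt_sq (norm_nonneg x), Real.sqrt_sq (mul_nonneg (norm_nonneg f) (norm_nonneg g))]
      at this

lemma hcsm_coe_smul (t : ℝ) (x : A) : ((t:ℂ)) • x = t • x := by
  rw [← Complex.coe_algebraMap, algebraMap_smul]

/-- AM–GM inequality in a Hilbert C*-module. -/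
lemma hcsm_am_gm (x y : E) (t : ℝ) (ht : 0 < t) :
    (⟪x, y⟫ : A) + ⟪y, x⟫ ≤ t • ⟪x, x⟫ + t⁻¹ • ⟪y, y⟫ := by
  set s : ℝ := Real.sqrt t with hs
  have hs0 : 0 < s := Real.sqrt_pos.mpr ht
  have hss : s * s = t := Real.mul_self_sqrt ht.le
  set u : E := (s:ℂ) • x with hu
  set v : E := ((s⁻¹ : ℝ):ℂ) • y with hv
  have cr : ∀ (r : ℝ) (w z : E), (⟪(r:ℂ) • w, (r:ℂ) • z⟫ : A) = (r*r) • ⟪w, z⟫ := by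
    intro r w z
    have h1 : (⟪(r:ℂ) • w, (r:ℂ) • z⟫ : A) = (r:ℂ) • star ((r:ℂ)) • ⟪w, z⟫ := by
      rw [HCSM.smulC_left, ← HCSM.star_inner ((r:ℂ) • z) w, HCSM.smulC_left, star_smul,
        HCSM.star_inner]
    rw [h1, show star ((r:ℂ)) = ((r:ℂ)) by simp [Complex.star_def, Complex.conj_ofReal],
      smul_smul, ← Complex.ofReal_mul, hcsm_coe_smul]
  have euu : (⟪u, u⟫ : A) = t • ⟪x, x⟫ := by rw [hu, cr, hss]
  have evv : (⟪v, v⟫ : A) = t⁻¹ • ⟪y, y⟫ := by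
    rw [hv, cr]
    congr 1
    rw [← hss]
    field_simp
  have cross : ∀ w z : E, (⟪(s:ℂ) • w, ((s⁻¹:ℝ):ℂ) • z⟫ : A) = ⟪w, z⟫ := by
    intro w z
    have h1 : (⟪(s:ℂ) • w, ((s⁻¹:ℝ):ℂ) • z⟫ : A) = (s:ℂ) • star (((s⁻¹:ℝ):ℂ)) • ⟪w, z⟫ := by
      rw [HCSM.smulC_left, ← HCSM.star_inner (((s⁻¹:ℝ):ℂ) • z) w, HCSM.smulC_left, star_smul,
        HCSM.star_inner]
    rw [h1, show star (((s⁻¹:ℝ):ℂ)) = (((s⁻¹:ℝ):ℂ)) by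
        simp [Complex.star_def, Complex.conj_ofReal],
      smul_smul, ← Complex.ofReal_mul, mul_inv_cancel₀ (ne_of_gt hs0)]
    simp
  have euv : (⟪u, v⟫ : A) = ⟪x, y⟫ := cross x y
  have evu : (⟪v, u⟫ : A) = ⟪y, x⟫ := by
    rw [← HCSM.star_inner u v, euv, HCSM.star_inner]
  have h0 : (0:A) ≤ ⟪u - v, u - v⟫ := HCSM.inner_nonneg _
  rw [hcsm_expand_sub, euu, evv, euv, evu] at h0
  have h1 : (0:A) ≤ t • ⟪x, x⟫ + t⁻¹ • ⟪y, y⟫ - (⟪x, y⟫ + ⟪y, x⟫) := by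
    have : t • (⟪x, x⟫:A) - ⟪x, y⟫ - ⟪y, x⟫ + t⁻¹ • ⟪y, y⟫
        = t • ⟪x, x⟫ + t⁻¹ • ⟪y, y⟫ - (⟪x, y⟫ + ⟪y, x⟫) := by abel
    rwa [this] at h0
  exact sub_nonneg.mp h1

end Helpers


section KeySeq
variable {A : Type*} [CStarAlgebra A] [PartialOrder A] [StarOrderedRing A]

lemma csa_le_norm_smul_one {a : A} (ha : 0 ≤ a) : a ≤ ‖a‖ • 1 := by
  have := IsSelfAdjoint.le_algebraMap_norm_self (a := a) (IsSelfAdjoint.of_nonneg ha)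
  simpa [Algebra.algebraMap_eq_smul_one] using this

/-- Key iteration lemma: a nonneg sequence in a C*-algebra satisfying the AM-GM
convexity estimate and geometric norm growth satisfies `c 1 ≤ r • c 0`. -/
lemma key_seq (c : ℕ → A) (r C : ℝ) (hr : 0 < r) (hC : 0 ≤ C)
    (h0 : ∀ k, 0 ≤ c k)
    (hconv : ∀ i j, ∀ t : ℝ, 0 < t → c (i+j) + c (i+j) ≤ t • c (i+i) + t⁻¹ • c (j+j))
    (hnorm : ∀ k, ‖c k‖ ≤ C * r^k) : c 1 ≤ r • c 0 := by
  set e : ℕ → A := fun k => (r^k)⁻¹ • c k with he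
  have hrk : ∀ k : ℕ, 0 < r ^ k := fun k => pow_pos hr k
  have he_nonneg : ∀ k, 0 ≤ e k := fun k => smul_nonneg (inv_nonneg.mpr (hrk k).le) (h0 k)
  have he_norm : ∀ k, ‖e k‖ ≤ C := by
    intro k
    rw [he]
    simp only
    rw [norm_smul, Real.norm_eq_abs, abs_of_nonneg (inv_nonneg.mpr (hrk k).le)]
    calc (r^k)⁻¹ * ‖c k‖ ≤ (r^k)⁻¹ * (C * r^k) := by
          exact mul_le_mul_of_nonneg_left (hnorm k) (inv_nonneg.mpr (hrk k).le)
      _ = C := by field_simp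
  have hstep : ∀ m : ℕ, e (2^m) ≤ (2⁻¹ : ℝ) • e (2^(m+1)) + (2⁻¹ : ℝ) • e 0 := by
    intro m
    have h := hconv (2^m) 0 ((r^(2^m))⁻¹) (inv_pos.mpr (hrk _))
    rw [add_zero, Nat.add_zero, inv_inv] at h
    -- h : c (2^m) + c (2^m) ≤ (r^(2^m))⁻¹ • c (2^m + 2^m) + (r^(2^m)) • c 0
    have h2 := smul_le_smul_of_nonneg_left h
      (le_of_lt (mul_pos (by norm_num : (0:ℝ) < 2⁻¹) (inv_pos.mpr (hrk (2^m)))))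
    have hpow : 2^m + 2^m = 2^(m+1) := by ring
    rw [hpow] at h2
    have lhs_eq : (2⁻¹ * (r^(2^m))⁻¹) • (c (2^m) + c (2^m)) = e (2^m) := by
      rw [smul_add, ← add_smul, he]
      simp only
      congr 1
      ring
    have rhs_eq : (2⁻¹ * (r^(2^m))⁻¹) • ((r^(2^m))⁻¹ • c (2^(m+1)) + (r^(2^m)) • c 0)
        = (2⁻¹ : ℝ) • e (2^(m+1)) + (2⁻¹ : ℝ) • e 0 := by
      simp only [he, pow_zero, inv_one, one_smul]
      rw [show (2:ℕ)^(m+1) = 2^m + 2^m by ring, pow_add]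
      rw [smul_add, smul_smul, smul_smul, smul_smul]
      congr 2
      · field_simp
      · field_simp
    rw [lhs_eq, rhs_eq] at h2
    exact h2
  have hiter : ∀ n : ℕ, e 1 ≤ ((2:ℝ)^n)⁻¹ • e (2^n) + (1 - ((2:ℝ)^n)⁻¹) • e 0 := by
    intro n
    induction n with
    | zero => simp
    | succ n ih =>
      have h2 := smul_le_smul_of_nonneg_left (hstep n)
        (inv_nonneg.mpr (pow_nonneg (by norm_num : (0:ℝ) ≤ 2) n))
      calc e 1 ≤ ((2:ℝ)^n)⁻¹ • e (2^n) + (1 - ((2:ℝ)^n)⁻¹) • e 0 := ih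
        _ ≤ ((2:ℝ)^n)⁻¹ • ((2⁻¹ : ℝ) • e (2^(n+1)) + (2⁻¹ : ℝ) • e 0)
            + (1 - ((2:ℝ)^n)⁻¹) • e 0 := add_le_add_left h2 _
        _ = ((2:ℝ)^(n+1))⁻¹ • e (2^(n+1)) + (1 - ((2:ℝ)^(n+1))⁻¹) • e 0 := by
            simp only [he, pow_zero, inv_one, one_smul]
            module
  have hbound : ∀ n : ℕ, e 1 ≤ (((2:ℝ)^n)⁻¹ * C) • 1 + e 0 := by
    intro n
    refine (hiter n).trans (add_le_add ?_ ?_)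
    · have h1 : e (2^n) ≤ C • 1 := by
        have ha := csa_le_norm_smul_one (he_nonneg (2^n))
        have hb : ‖e (2^n)‖ • (1:A) ≤ C • 1 := by
          rw [← sub_nonneg, ← sub_smul]
          exact smul_nonneg (by linarith [he_norm (2^n)]) zero_le_one
        exact ha.trans hb
      calc ((2:ℝ)^n)⁻¹ • e (2^n) ≤ ((2:ℝ)^n)⁻¹ • (C • (1:A)) :=
            smul_le_smul_of_nonneg_left h1
              (inv_nonneg.mpr (pow_nonneg (by norm_num : (0:ℝ) ≤ 2) n))
        _ = (((2:ℝ)^n)⁻¹ * C) • 1 := by rw [smul_smul]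
    · have h3 : (0:ℝ) ≤ ((2:ℝ)^n)⁻¹ := inv_nonneg.mpr (pow_nonneg (by norm_num) n)
      have h4 : (1 - ((2:ℝ)^n)⁻¹) • e 0 ≤ ((1:ℝ)) • e 0 := by
        rw [← sub_nonneg, ← sub_smul]
        exact smul_nonneg (by linarith) (he_nonneg 0)
      simpa using h4
  have hlim : e 1 ≤ e 0 := by
    have htend : Filter.Tendsto (fun n : ℕ => (((2:ℝ)^n)⁻¹ * C) • (1:A) + e 0)
        Filter.atTop (nhds ((0:ℝ) • (1:A) + e 0)) := by
      refine Filter.Tendsto.add_const _ ?_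
      refine Filter.Tendsto.smul_const ?_ _
      have : Filter.Tendsto (fun n : ℕ => ((2:ℝ)⁻¹)^n * C) Filter.atTop (nhds (0 * C)) :=
        Filter.Tendsto.mul_const _ (tendsto_pow_atTop_nhds_zero_of_lt_one (by norm_num)
          (by norm_num))
      simpa [inv_pow] using this
    have := ge_of_tendsto htend (Filter.Eventually.of_forall hbound)
    simpa using this
  -- conclude
  have h9 := smul_le_smul_of_nonneg_left hlim hr.le
  have e1eq : r • e 1 = c 1 := by
    simp only [he]
    rw [pow_one, smul_smul, mul_inv_cancel₀ (ne_of_gt hr), one_smul]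
  have e0eq : r • e 0 = r • c 0 := by
    simp only [he]
    rw [pow_zero, inv_one, one_smul]
  rwa [e1eq, e0eq] at h9

end KeySeq

open Filter Topology in
set_option maxHeartbeats 2000000 in
theorem gram_operator_of_riesz_basis
    {A : Type*} [CStarAlgebra A] [PartialOrder A] [StarOrderedRing A]
    {U : Type*} [NormedAddCommGroup U] [NormedSpace ℂ U] [CompleteSpace U] [HCSM A U]
    {Ω : Type*} [MeasurableSpace Ω] (μ : Measure Ω)
    {H : Type*} [NormedAddCommGroup H] [NormedSpace ℂ H] [CompleteSpace H] [HCSM A H]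
    (L : L2Model A μ H)
    (F : Ω → U) (a b : ℝ) (hF : IsRieszBasis μ F a b)
    (T : H →L[ℂ] U) (hT : ∀ φ : H, T φ = ∫ ω, L.repr φ ω • F ω ∂μ)
    (Tadj : U →L[ℂ] H)
    (hadj : ∀ (φ : H) (f : U), (⟪T φ, f⟫ : A) = ⟪φ, Tadj f⟫)
    (hanalysis : ∀ f : U, L.repr (Tadj f) =ᵐ[μ] fun ω => (⟪f, F ω⟫ : A))
    (hTnorm : ‖T‖ ≤ Real.sqrt b) :
    (∀ φ : H, L.repr (Tadj (T φ)) =ᵐ[μ] fun γ => ∫ ω, L.repr φ ω * (⟪F ω, F γ⟫ : A) ∂μ) ∧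
    ∃ W : H →L[ℂ] H,
      W.comp (Tadj.comp T) = ContinuousLinearMap.id ℂ H ∧
      (Tadj.comp T).comp W = ContinuousLinearMap.id ℂ H ∧
      ∀ φ : H, ‖W‖⁻¹ • (⟪φ, φ⟫ : A) ≤ ⟪Tadj (T φ), φ⟫ ∧
        (⟪Tadj (T φ), φ⟫ : A) ≤ b • ⟪φ, φ⟫ := by
  obtain ⟨hFw, hFcomp, ha, hb, hFmain⟩ := hF
  set S : H →L[ℂ] H := Tadj.comp T with hSdef
  have hSapp : ∀ φ : H, S φ = Tadj (T φ) := fun φ => rfl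
  -- inner product moves
  have hST : ∀ x y : H, (⟪S x, y⟫ : A) = ⟪T x, T y⟫ := by
    intro x y
    have h1 : (⟪T y, T x⟫ : A) = ⟪y, S x⟫ := by rw [hSapp]; exact hadj y (T x)
    rw [← HCSM.star_inner y (S x), ← h1, HCSM.star_inner]
  have hST' : ∀ x y : H, (⟪x, S y⟫ : A) = ⟪T x, T y⟫ := by
    intro x y
    rw [← HCSM.star_inner (S y) x, hST, HCSM.star_inner]
  have hSsym : ∀ x y : H, (⟪S x, y⟫ : A) = ⟪x, S y⟫ := by
    intro x y; rw [hST, hST']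
  -- ====== Part 1 : pointwise kernel formula ======
  have part1 : ∀ φ : H,
      L.repr (Tadj (T φ)) =ᵐ[μ] fun γ => ∫ ω, L.repr φ ω * (⟪F ω, F γ⟫ : A) ∂μ := by
    intro φ
    have h2 : ∀ γ : Ω, (⟪T φ, F γ⟫ : A) = ∫ ω, L.repr φ ω * (⟪F ω, F γ⟫ : A) ∂μ := by
      intro γ
      rw [hadj φ (F γ), L.inner_eq]
      apply integral_congr_ae
      filter_upwards [hanalysis (F γ)] with ω hω
      rw [hω, HCSM.star_inner]
    exact (hanalysis (T φ)).trans (Filter.EventuallyEq.of_eq (funext h2))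
  -- ====== general operator facts ======
  have hpownorm : ∀ (R : H →L[ℂ] H) (k : ℕ) (x : H), ‖(R^k) x‖ ≤ ‖R‖^k * ‖x‖ := by
    intro R k
    induction k with
    | zero => intro x; simp
    | succ k ih =>
      intro x
      rw [pow_succ']
      calc ‖(R * R^k) x‖ = ‖R ((R^k) x)‖ := by rw [ContinuousLinearMap.mul_apply]
        _ ≤ ‖R‖ * ‖(R^k) x‖ := R.le_opNorm _
        _ ≤ ‖R‖ * (‖R‖^k * ‖x‖) := by
            exact mul_le_mul_of_nonneg_left (ih x) (norm_nonneg R)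
        _ = ‖R‖^(k+1) * ‖x‖ := by ring
  have hpow_move : ∀ (R : H →L[ℂ] H), (∀ x y : H, (⟪R x, y⟫ : A) = ⟪x, R y⟫) →
      ∀ (k : ℕ) (x y : H), (⟪(R^k) x, y⟫ : A) = ⟪x, (R^k) y⟫ := by
    intro R hR k
    induction k with
    | zero => intro x y; simp
    | succ k ih =>
      intro x y
      rw [pow_succ']
      rw [ContinuousLinearMap.mul_apply, ContinuousLinearMap.mul_apply]
      rw [hR ((R^k) x) y, ih x (R y)]
      congr 1
      rw [← ContinuousLinearMap.mul_apply, ← ContinuousLinearMap.mul_apply, ← pow_succ,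
        ← pow_succ']
  have hTsq : ‖T‖ * ‖T‖ ≤ b := by
    have h1 := Real.sq_sqrt hb.le
    nlinarith [norm_nonneg T, Real.sqrt_nonneg b]
  have hTadjnorm : ‖Tadj‖ ≤ ‖T‖ := by
    refine ContinuousLinearMap.opNorm_le_bound _ (norm_nonneg T) ?_
    intro f
    by_cases h0 : Tadj f = 0
    · rw [h0]; simp; positivity
    · have hpos : 0 < ‖Tadj f‖ := norm_pos_iff.mpr h0
      have hineq : ‖Tadj f‖^2 ≤ (‖T‖ * ‖Tadj f‖) * ‖f‖ := by
        calc ‖Tadj f‖^2 = ‖(⟪Tadj f, Tadj f⟫ : A)‖ := (hcsm_norm_inner_self _).symm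
          _ = ‖(⟪T (Tadj f), f⟫ : A)‖ := by rw [hadj (Tadj f) f]
          _ ≤ ‖T (Tadj f)‖ * ‖f‖ := hcsm_norm_inner_le _ _
          _ ≤ (‖T‖ * ‖Tadj f‖) * ‖f‖ := by
              exact mul_le_mul_of_nonneg_right (T.le_opNorm _) (norm_nonneg f)
      nlinarith [hpos]
  have hSnorm : ‖S‖ ≤ b := by
    calc ‖S‖ ≤ ‖Tadj‖ * ‖T‖ := ContinuousLinearMap.opNorm_comp_le _ _
      _ ≤ ‖T‖ * ‖T‖ := mul_le_mul_of_nonneg_right hTadjnorm (norm_nonneg T)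
      _ ≤ b := hTsq
  -- ====== upper bound ======
  have hupper : ∀ φ : H, (⟪Tadj (T φ), φ⟫ : A) ≤ b • ⟪φ, φ⟫ := by
    intro φ
    have hmove := hpow_move S hSsym
    set c : ℕ → A := fun k => ⟪(S^k) φ, φ⟫ with hcdef
    have hpair : ∀ i j : ℕ, c (i+j) = ⟪(S^j) φ, (S^i) φ⟫ := by
      intro i j
      rw [hcdef]
      simp only
      rw [pow_add, ContinuousLinearMap.mul_apply, hmove i]
    have h0 : ∀ k, 0 ≤ c k := by
      intro k
      rcases Nat.even_or_odd k with ⟨m, hm⟩ | ⟨m, hm⟩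
      · rw [hm, hpair m m]
        exact HCSM.inner_nonneg _
      · have hk : k = m + (m+1) := by omega
        rw [hk, hpair m (m+1), pow_succ', ContinuousLinearMap.mul_apply, hST]
        exact HCSM.inner_nonneg _
    have hconv : ∀ i j, ∀ t : ℝ, 0 < t → c (i+j) + c (i+j) ≤ t • c (i+i) + t⁻¹ • c (j+j) := by
      intro i j t ht
      have h1 := hcsm_am_gm ((S^i) φ) ((S^j) φ) t ht
      have e1 : c (i+j) = ⟪(S^i) φ, (S^j) φ⟫ := by rw [add_comm i j]; exact hpair j i
      have e2 : c (i+j) = ⟪(S^j) φ, (S^i) φ⟫ := hpair i j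
      rw [← e1, ← e2, ← hpair i i, ← hpair j j] at h1
      exact h1
    have hnorm : ∀ k, ‖c k‖ ≤ (‖φ‖^2) * b^k := by
      intro k
      calc ‖c k‖ ≤ ‖(S^k) φ‖ * ‖φ‖ := hcsm_norm_inner_le _ _
        _ ≤ (‖S‖^k * ‖φ‖) * ‖φ‖ := by
            exact mul_le_mul_of_nonneg_right (hpownorm S k φ) (norm_nonneg φ)
        _ ≤ (b^k * ‖φ‖) * ‖φ‖ := by
            have hp := pow_le_pow_left₀ (norm_nonneg S) hSnorm k
            exact mul_le_mul_of_nonneg_right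
              (mul_le_mul_of_nonneg_right hp (norm_nonneg φ)) (norm_nonneg φ)
        _ = ‖φ‖^2 * b^k := by ring
    have hkey := key_seq c b (‖φ‖^2) hb (sq_nonneg _) h0 hconv hnorm
    have hc1 : c 1 = ⟪Tadj (T φ), φ⟫ := by
      rw [hcdef]; simp only [pow_one]; rw [hSapp]
    have hc0 : c 0 = ⟪φ, φ⟫ := by
      rw [hcdef]; simp only [pow_zero]; rw [ContinuousLinearMap.one_apply]
    rwa [hc1, hc0] at hkey
  -- ====== lower bound for T from the Riesz basis property ======
  have hTlow : ∀ φ : H, a * ‖φ‖ ≤ ‖T φ‖ := by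
    intro φ
    obtain ⟨hgm, hgi⟩ := L.memL2 φ
    set g : Ω → A := L.repr φ with hg
    set h : Ω → A := fun ω => g ω * star (g ω) with hh
    have hhm : AEStronglyMeasurable h μ := hgi.aestronglyMeasurable
    set h' : Ω → A := hhm.mk h with hh'
    have hmeas : StronglyMeasurable h' := hhm.stronglyMeasurable_mk
    have haeq : h =ᵐ[μ] h' := hhm.ae_eq_mk
    have hh'i : Integrable h' μ := hgi.congr haeq
    set Os : ℕ → Set Ω := fun n => {ω | (1:ℝ)/(n+1) ≤ ‖h' ω‖} with hOs
    have hOmeas : ∀ n, MeasurableSet (Os n) :=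
      fun n => measurableSet_le measurable_const hmeas.norm.measurable
    have hOmono : Monotone Os := by
      intro m n hmn ω hω
      simp only [hOs, Set.mem_setOf_eq] at hω ⊢
      refine le_trans ?_ hω
      have h1 : (0:ℝ) < (m:ℝ) + 1 := by positivity
      have h2 : ((m:ℝ) + 1) ≤ (n:ℝ) + 1 := by
        have : (m:ℝ) ≤ n := by exact_mod_cast hmn
        linarith
      exact one_div_le_one_div_of_le h1 h2
    have hOfin : ∀ n, μ (Os n) < ⊤ := fun n =>
      hh'i.measure_norm_ge_lt_top (by positivity)
    have hOzero : ∀ ω, ω ∉ (⋃ n, Os n) → h' ω = 0 := by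
      intro ω hω
      by_contra hne
      have hpos : 0 < ‖h' ω‖ := norm_pos_iff.mpr hne
      obtain ⟨n, hn⟩ := exists_nat_one_div_lt hpos
      exact hω (Set.mem_iUnion.mpr ⟨n, le_of_lt hn⟩)
    have hIconv : Filter.Tendsto (fun n => ∫ ω in Os n, h ω ∂μ) Filter.atTop
        (nhds (∫ ω, h ω ∂μ)) := by
      have h1 : ∀ n, ∫ ω in Os n, h ω ∂μ = ∫ ω in Os n, h' ω ∂μ := fun n =>
        setIntegral_congr_ae (hOmeas n) (haeq.mono fun ω hω _ => hω)
      have h2 : Filter.Tendsto (fun n => ∫ ω in Os n, h' ω ∂μ) Filter.atTop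
          (nhds (∫ ω in ⋃ n, Os n, h' ω ∂μ)) :=
        tendsto_setIntegral_of_monotone hOmeas hOmono hh'i.integrableOn
      have h3 : ∫ ω in (⋃ n, Os n), h' ω ∂μ = ∫ ω, h' ω ∂μ := by
        rw [← integral_indicator (MeasurableSet.iUnion hOmeas)]
        congr 1
        funext ω
        by_cases hω : ω ∈ ⋃ n, Os n
        · simp [Set.indicator_of_mem hω]
        · simp [Set.indicator_of_notMem hω, hOzero ω hω]
      have h4 : ∫ ω, h' ω ∂μ = ∫ ω, h ω ∂μ := integral_congr_ae haeq.symm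
      simp only [h1]
      rw [← h4, ← h3]
      exact h2
    have hexψ : ∀ n : ℕ, ∃ ψ : H, L.repr ψ =ᵐ[μ] (Os n).indicator g := by
      intro n
      apply L.surj
      constructor
      · exact hgm.indicator (hOmeas n)
      · have he : (fun ω => (Os n).indicator g ω * star ((Os n).indicator g ω))
            = (Os n).indicator h := by
          funext ω
          by_cases hω : ω ∈ Os n <;>
            simp [Set.indicator_of_mem, Set.indicator_of_notMem, hω, hh]
        rw [he]
        exact hgi.indicator (hOmeas n)
    choose ψ hψ using hexψ
    have hinner : ∀ (x y : H) (gx gy : Ω → A), L.repr x =ᵐ[μ] gx → L.repr y =ᵐ[μ] gy →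
        (⟪x, y⟫ : A) = ∫ ω, gx ω * star (gy ω) ∂μ := by
      intro x y gx gy hx hy
      rw [L.inner_eq]
      apply integral_congr_ae
      filter_upwards [hx, hy] with ω e1 e2
      rw [e1, e2]
    set I : ℕ → A := fun n => ∫ ω in Os n, h ω ∂μ with hI
    have e_φφ : (⟪φ, φ⟫ : A) = ∫ ω, h ω ∂μ := by
      rw [hinner φ φ g g (by rw [hg]) (by rw [hg])]
    have e_ψψ : ∀ n, (⟪ψ n, ψ n⟫ : A) = I n := by
      intro n
      rw [hinner _ _ _ _ (hψ n) (hψ n), hI]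
      simp only
      rw [← integral_indicator (hOmeas n)]
      congr 1
      funext ω
      by_cases hω : ω ∈ Os n <;>
        simp [Set.indicator_of_mem, Set.indicator_of_notMem, hω, hh]
    have e_φψ : ∀ n, (⟪φ, ψ n⟫ : A) = I n := by
      intro n
      rw [hinner _ _ _ _ (by rw [hg] : L.repr φ =ᵐ[μ] g) (hψ n), hI]
      simp only
      rw [← integral_indicator (hOmeas n)]
      congr 1
      funext ω
      by_cases hω : ω ∈ Os n <;>
        simp [Set.indicator_of_mem, Set.indicator_of_notMem, hω, hh]
    have e_ψφ : ∀ n, (⟪ψ n, φ⟫ : A) = I n := by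
      intro n
      rw [hinner _ _ _ _ (hψ n) (by rw [hg] : L.repr φ =ᵐ[μ] g), hI]
      simp only
      rw [← integral_indicator (hOmeas n)]
      congr 1
      funext ω
      by_cases hω : ω ∈ Os n <;>
        simp [Set.indicator_of_mem, Set.indicator_of_notMem, hω, hh]
    have hdiff : ∀ n, (⟪φ - ψ n, φ - ψ n⟫ : A) = (∫ ω, h ω ∂μ) - I n := by
      intro n
      rw [hcsm_expand_sub, e_φφ, e_φψ n, e_ψφ n, e_ψψ n]
      abel
    have hψconv : Filter.Tendsto ψ Filter.atTop (nhds φ) := by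
      have h5 : Filter.Tendsto (fun n => (∫ ω, h ω ∂μ) - I n) Filter.atTop (nhds 0) := by
        simpa using hIconv.const_sub (∫ ω, h ω ∂μ)
      have h6 : Filter.Tendsto (fun n => Real.sqrt ‖(∫ ω, h ω ∂μ) - I n‖)
          Filter.atTop (nhds 0) := by
        have h7 := (continuous_norm.tendsto (0:A)).comp h5
        simp only [Function.comp_def, norm_zero] at h7
        have h8 := (Real.continuous_sqrt.tendsto 0).comp h7
        simpa [Function.comp_def] using h8
      have hnormeq : ∀ n, ‖ψ n - φ‖ = Real.sqrt ‖(∫ ω, h ω ∂μ) - I n‖ := by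
        intro n
        rw [show ψ n - φ = -(φ - ψ n) by abel, norm_neg, HCSM.norm_inner, hdiff n]
      rw [tendsto_iff_norm_sub_tendsto_zero]
      simp only [hnormeq]
      exact h6
    have hRpt : ∀ n, a * Real.sqrt ‖I n‖ ≤ ‖T (ψ n)‖ := by
      intro n
      have hRi := (hFmain g ⟨hgm, hgi⟩ (Os n) (hOmeas n) (hOfin n)).1
      have hTn : T (ψ n) = ∫ ω in Os n, g ω • F ω ∂μ := by
        rw [hT (ψ n), ← integral_indicator (hOmeas n)]
        apply integral_congr_ae
        filter_upwards [hψ n] with ω e1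
        rw [e1]
        by_cases hω : ω ∈ Os n <;>
          simp [Set.indicator_of_mem, Set.indicator_of_notMem, hω, hcsm_zero_smul]
      rw [hTn]
      exact hRi
    have hL : Filter.Tendsto (fun n => a * Real.sqrt ‖I n‖) Filter.atTop
        (nhds (a * Real.sqrt ‖∫ ω, h ω ∂μ‖)) := by
      have h9 := ((Real.continuous_sqrt.comp continuous_norm).tendsto (∫ ω, h ω ∂μ)).comp hIconv
      simpa [Function.comp_def] using h9.const_mul a
    have hR : Filter.Tendsto (fun n => ‖T (ψ n)‖) Filter.atTop (nhds ‖T φ‖) := by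
      have h9 := (continuous_norm.tendsto (T φ)).comp ((T.continuous.tendsto φ).comp hψconv)
      simpa [Function.comp_def] using h9
    have hfin := le_of_tendsto_of_tendsto' hL hR hRpt
    have hφn : Real.sqrt ‖∫ ω, h ω ∂μ‖ = ‖φ‖ := by
      rw [← e_φφ, ← HCSM.norm_inner]
    rwa [hφn] at hfin
  -- ====== S + t is bounded below uniformly for t ≥ 0 ======
  have haa : 0 < a * a := mul_pos ha ha
  have hQ : ∀ t : ℝ, 0 ≤ t → ∀ φ : H,
      (a*a) * ‖φ‖ ≤ ‖(S + (t:ℂ) • (1:H →L[ℂ] H)) φ‖ := by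
    intro t ht φ
    by_cases hφ : φ = 0
    · simp [hφ]
    have hφpos : 0 < ‖φ‖ := norm_pos_iff.mpr hφ
    have happ : (S + (t:ℂ) • (1:H →L[ℂ] H)) φ = S φ + (t:ℂ) • φ := by
      simp [ContinuousLinearMap.add_apply, ContinuousLinearMap.smul_apply,
        ContinuousLinearMap.one_apply]
    have hie : (⟪(S + (t:ℂ) • (1:H →L[ℂ] H)) φ, φ⟫ : A) = ⟪S φ, φ⟫ + t • ⟪φ, φ⟫ := by
      rw [happ, HCSM.add_left, HCSM.smulC_left, hcsm_coe_smul]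
    have h2 : (0:A) ≤ ⟪S φ, φ⟫ := by rw [hST]; exact HCSM.inner_nonneg _
    have h1 : (⟪S φ, φ⟫ : A) ≤ ⟪(S + (t:ℂ) • (1:H →L[ℂ] H)) φ, φ⟫ := by
      rw [hie]
      exact le_add_of_nonneg_right (smul_nonneg ht (HCSM.inner_nonneg φ))
    have h3 : ‖(⟪S φ, φ⟫ : A)‖ ≤ ‖(⟪(S + (t:ℂ) • (1:H →L[ℂ] H)) φ, φ⟫ : A)‖ :=
      CStarAlgebra.norm_le_norm_of_nonneg_of_le h2 h1
    have h4 : ‖(⟪(S + (t:ℂ) • (1:H →L[ℂ] H)) φ, φ⟫ : A)‖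
        ≤ ‖(S + (t:ℂ) • (1:H →L[ℂ] H)) φ‖ * ‖φ‖ := hcsm_norm_inner_le _ _
    have h5 : ‖(⟪S φ, φ⟫ : A)‖ = ‖T φ‖^2 := by
      rw [hST]; exact hcsm_norm_inner_self (T φ)
    have h6 : (a*‖φ‖) * (a*‖φ‖) ≤ ‖T φ‖ * ‖T φ‖ :=
      mul_le_mul (hTlow φ) (hTlow φ) (mul_nonneg ha.le (norm_nonneg φ)) (norm_nonneg _)
    have h7 : ((a*a)*‖φ‖) * ‖φ‖ ≤ ‖(S + (t:ℂ) • (1:H →L[ℂ] H)) φ‖ * ‖φ‖ := by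
      calc ((a*a)*‖φ‖) * ‖φ‖ = (a*‖φ‖)*(a*‖φ‖) := by ring
        _ ≤ ‖T φ‖ * ‖T φ‖ := h6
        _ = ‖T φ‖^2 := by ring
        _ = ‖(⟪S φ, φ⟫ : A)‖ := h5.symm
        _ ≤ ‖(⟪(S + (t:ℂ) • (1:H →L[ℂ] H)) φ, φ⟫ : A)‖ := h3
        _ ≤ ‖(S + (t:ℂ) • (1:H →L[ℂ] H)) φ‖ * ‖φ‖ := h4
    exact le_of_mul_le_mul_right h7 hφpos
  -- ====== invertibility via descent ======
  have hQinv : ∀ (t : ℝ), 0 ≤ t → ∀ (w : (H →L[ℂ] H)ˣ),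
      ((w : H →L[ℂ] H) = S + (t:ℂ) • 1) →
      ‖((w⁻¹ : (H →L[ℂ] H)ˣ) : H →L[ℂ] H)‖ ≤ (a*a)⁻¹ := by
    intro t ht w hw
    refine ContinuousLinearMap.opNorm_le_bound _ (by positivity) ?_
    intro ξ
    have h1 := hQ t ht (((w⁻¹ : (H →L[ℂ] H)ˣ) : H →L[ℂ] H) ξ)
    rw [← hw] at h1
    have h2 : (w : H →L[ℂ] H) (((w⁻¹ : (H →L[ℂ] H)ˣ) : H →L[ℂ] H) ξ) = ξ := by
      rw [← ContinuousLinearMap.mul_apply, Units.mul_inv, ContinuousLinearMap.one_apply]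
    rw [h2] at h1
    calc ‖((w⁻¹ : (H →L[ℂ] H)ˣ) : H →L[ℂ] H) ξ‖
        = (a*a)⁻¹ * ((a*a) * ‖((w⁻¹ : (H →L[ℂ] H)ˣ) : H →L[ℂ] H) ξ‖) := by
          field_simp
      _ ≤ (a*a)⁻¹ * ‖ξ‖ := mul_le_mul_of_nonneg_left h1 (inv_nonneg.mpr haa.le)
  set δ : ℝ := (a*a)/2 with hδdef
  have hδ : 0 < δ := by positivity
  have hmain : ∀ n : ℕ, ∀ t : ℝ, 0 ≤ t → ‖S‖ + 1 ≤ t + n * δ →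
      IsUnit (S + (t:ℂ) • (1:H →L[ℂ] H)) := by
    intro n
    induction n with
    | zero =>
      intro t ht hle
      simp only [Nat.cast_zero, zero_mul, add_zero] at hle
      have htpos : 0 < t := lt_of_lt_of_le (by positivity) hle
      have htc : (t:ℂ) ≠ 0 := Complex.ofReal_ne_zero.mpr (ne_of_gt htpos)
      have hu1 : IsUnit ((t:ℂ) • (1:H →L[ℂ] H)) := by
        refine ⟨⟨(t:ℂ) • 1, (t:ℂ)⁻¹ • 1, ?_, ?_⟩, rfl⟩
        · rw [smul_mul_smul_comm, mul_one, mul_inv_cancel₀ htc, one_smul]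
        · rw [smul_mul_smul_comm, mul_one, inv_mul_cancel₀ htc, one_smul]
      have hnorm1 : ‖-((t:ℂ)⁻¹ • S)‖ < 1 := by
        rw [norm_neg]
        refine lt_of_le_of_lt (ContinuousLinearMap.opNorm_smul_le _ _) ?_
        have he : ‖(t:ℂ)⁻¹‖ = t⁻¹ := by
          rw [norm_inv, Complex.norm_real, Real.norm_eq_abs, abs_of_pos htpos]
        rw [he]
        have h9 : ‖S‖ < t := by linarith
        calc t⁻¹ * ‖S‖ < t⁻¹ * t := by
              exact mul_lt_mul_of_pos_left h9 (inv_pos.mpr htpos)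
          _ = 1 := inv_mul_cancel₀ (ne_of_gt htpos)
      have hx : IsUnit ((1:H →L[ℂ] H) - (-((t:ℂ)⁻¹ • S))) := (Units.oneSub _ hnorm1).isUnit
      have heq : S + (t:ℂ) • (1:H →L[ℂ] H)
          = ((t:ℂ) • (1:H →L[ℂ] H)) * (1 - (-((t:ℂ)⁻¹ • S))) := by
        rw [sub_neg_eq_add, mul_add, mul_one, smul_mul_smul_comm, mul_inv_cancel₀ htc,
          one_smul, one_mul]
        abel
      rw [heq]
      exact hu1.mul hx
    | succ n ih =>
      intro t ht hle
      by_cases hcase : ‖S‖ + 1 ≤ t + n * δ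
      · exact ih t ht hcase
      · have h1 : IsUnit (S + ((t+δ : ℝ):ℂ) • (1:H →L[ℂ] H)) := by
          apply ih (t+δ) (by linarith)
          push_cast at hle ⊢
          linarith
        obtain ⟨w, hw⟩ := h1
        have hwninv : ‖((w⁻¹ : (H →L[ℂ] H)ˣ) : H →L[ℂ] H)‖ ≤ (a*a)⁻¹ :=
          hQinv (t+δ) (by linarith) w hw
        have hbnd : ‖(δ:ℂ) • ((w⁻¹ : (H →L[ℂ] H)ˣ) : H →L[ℂ] H)‖ < 1 := by
          refine lt_of_le_of_lt (ContinuousLinearMap.opNorm_smul_le _ _) ?_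
          rw [Complex.norm_real, Real.norm_eq_abs, abs_of_pos hδ]
          calc δ * ‖((w⁻¹ : (H →L[ℂ] H)ˣ) : H →L[ℂ] H)‖ ≤ δ * (a*a)⁻¹ :=
                mul_le_mul_of_nonneg_left hwninv hδ.le
            _ = 1/2 := by rw [hδdef]; field_simp
            _ < 1 := by norm_num
        have hx : IsUnit (1 - (δ:ℂ) • ((w⁻¹ : (H →L[ℂ] H)ˣ) : H →L[ℂ] H)) :=
          (Units.oneSub _ hbnd).isUnit
        have heq : S + (t:ℂ) • (1:H →L[ℂ] H)
            = (w : H →L[ℂ] H) * (1 - (δ:ℂ) • ((w⁻¹ : (H →L[ℂ] H)ˣ) : H →L[ℂ] H)) := by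
          rw [mul_sub, mul_one, mul_smul_comm, Units.mul_inv, hw]
          push_cast
          module
        rw [heq]
        exact w.isUnit.mul hx
  have hunit : IsUnit S := by
    obtain ⟨n, hn⟩ := exists_nat_ge ((‖S‖ + 1)/δ)
    have h1 := hmain n 0 le_rfl (by
      rw [zero_add]
      calc ‖S‖ + 1 = ((‖S‖+1)/δ) * δ := by field_simp
        _ ≤ n * δ := mul_le_mul_of_nonneg_right hn hδ.le)
    simpa using h1
  obtain ⟨v, hv⟩ := hunit
  set W : H →L[ℂ] H := ((v⁻¹ : (H →L[ℂ] H)ˣ) : H →L[ℂ] H) with hWdef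
  have hWS : W * S = 1 := by rw [hWdef, ← hv]; exact v.inv_mul
  have hSW : S * W = 1 := by rw [hWdef, ← hv]; exact v.mul_inv
  have hWSapp : ∀ x : H, W (S x) = x := by
    intro x
    rw [← ContinuousLinearMap.mul_apply, hWS, ContinuousLinearMap.one_apply]
  have hSWapp : ∀ x : H, S (W x) = x := by
    intro x
    rw [← ContinuousLinearMap.mul_apply, hSW, ContinuousLinearMap.one_apply]
  have hWsym : ∀ x y : H, (⟪W x, y⟫ : A) = ⟪x, W y⟫ := by
    intro x y
    calc (⟪W x, y⟫ : A) = ⟪W x, S (W y)⟫ := by rw [hSWapp y]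
      _ = ⟪T (W x), T (W y)⟫ := hST' (W x) (W y)
      _ = ⟪S (W x), W y⟫ := (hST (W x) (W y)).symm
      _ = ⟪x, W y⟫ := by rw [hSWapp x]
  -- ====== lower inequality ======
  have hlower : ∀ φ : H, ‖W‖⁻¹ • (⟪φ, φ⟫ : A) ≤ ⟪Tadj (T φ), φ⟫ := by
    intro φ
    by_cases hW0 : ‖W‖ = 0
    · rw [hW0, inv_zero, zero_smul, ← hSapp, hST]
      exact HCSM.inner_nonneg _
    have hWpos : 0 < ‖W‖ := lt_of_le_of_ne (norm_nonneg W) (Ne.symm hW0)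
    set ψ : H := S φ with hψdef
    have hWmove := hpow_move W hWsym
    set d : ℕ → A := fun k => ⟪(W^(k+1)) ψ, ψ⟫ with hddef
    have hdpair : ∀ i j : ℕ, d (i+j) = ⟪T ((W^(i+1)) ψ), T ((W^(j+1)) ψ)⟫ := by
      intro i j
      have r1 : (⟪T ((W^(i+1)) ψ), T ((W^(j+1)) ψ)⟫ : A)
          = ⟪S ((W^(i+1)) ψ), (W^(j+1)) ψ⟫ := (hST _ _).symm
      have r2 : S ((W^(i+1)) ψ) = (W^i) ψ := by
        rw [pow_succ', ContinuousLinearMap.mul_apply, hSWapp]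
      have r3 : (⟪(W^i) ψ, (W^(j+1)) ψ⟫ : A) = ⟪(W^(j+1)) ((W^i) ψ), ψ⟫ :=
        (hWmove (j+1) ((W^i) ψ) ψ).symm
      have r4 : (W^(j+1)) ((W^i) ψ) = (W^(i+j+1)) ψ := by
        rw [← ContinuousLinearMap.mul_apply, ← pow_add]
        have : j + 1 + i = i + j + 1 := by omega
        rw [this]
      rw [hddef]
      simp only
      rw [r1, r2, r3, r4]
    have hd0 : ∀ k, 0 ≤ d k := by
      intro k
      rcases Nat.even_or_odd k with ⟨m, hm⟩ | ⟨m, hm⟩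
      · rw [hm, hdpair m m]
        exact HCSM.inner_nonneg _
      · have hk1 : k + 1 = (m+1) + (m+1) := by omega
        rw [hddef]
        simp only
        rw [hk1, pow_add, ContinuousLinearMap.mul_apply, hWmove (m+1)]
        exact HCSM.inner_nonneg _
    have hdconv : ∀ i j, ∀ t : ℝ, 0 < t →
        d (i+j) + d (i+j) ≤ t • d (i+i) + t⁻¹ • d (j+j) := by
      intro i j t ht
      have h1 := hcsm_am_gm (T ((W^(i+1)) ψ)) (T ((W^(j+1)) ψ)) t ht
      have e2 : d (i+j) = ⟪T ((W^(j+1)) ψ), T ((W^(i+1)) ψ)⟫ := by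
        rw [add_comm i j]; exact hdpair j i
      rw [← hdpair i j, ← e2, ← hdpair i i, ← hdpair j j] at h1
      exact h1
    have hdnorm : ∀ k, ‖d k‖ ≤ (‖W‖ * ‖ψ‖^2) * ‖W‖^k := by
      intro k
      calc ‖d k‖ ≤ ‖(W^(k+1)) ψ‖ * ‖ψ‖ := hcsm_norm_inner_le _ _
        _ ≤ (‖W‖^(k+1) * ‖ψ‖) * ‖ψ‖ :=
            mul_le_mul_of_nonneg_right (hpownorm W (k+1) ψ) (norm_nonneg ψ)
        _ = (‖W‖ * ‖ψ‖^2) * ‖W‖^k := by ring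
    have hkey := key_seq d ‖W‖ (‖W‖ * ‖ψ‖^2) hWpos
      (by positivity) hd0 hdconv hdnorm
    have hd1 : d 1 = ⟪φ, φ⟫ := by
      rw [hddef]
      simp only
      rw [pow_add, pow_one, ContinuousLinearMap.mul_apply, hWsym, hψdef, hWSapp]
    have hd0' : d 0 = ⟪Tadj (T φ), φ⟫ := by
      rw [hddef]
      simp only
      rw [zero_add, pow_one, hψdef, hWSapp, ← hSsym, hSapp]
    rw [hd1, hd0'] at hkey
    have h8 := smul_le_smul_of_nonneg_left hkey (inv_nonneg.mpr hWpos.le)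
    rwa [smul_smul, inv_mul_cancel₀ (ne_of_gt hWpos), one_smul] at h8
  -- ====== assembly ======
  refine ⟨part1, W, ?_, ?_, fun φ => ⟨hlower φ, hupper φ⟩⟩
  · rw [← ContinuousLinearMap.mul_def, hWS]
    exact ContinuousLinearMap.one_def
  · rw [← ContinuousLinearMap.mul_def, hSW]
    exact ContinuousLinearMap.one_def
end
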